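/- Let U, V ⊆ F_q^n and let u, v ∈ F_q^n. If Ξ is a uniformly distributed random monomial map on F_q^n (i.e., uniform over the set M_n of all monomial maps), then P{u ∈ Ξ(U) and v ∈ Ξ(V)} = A_{sw(u,v)}(U, V) / A_{sw(u,v)}(F_q^n, F_q^n). Equivalently, the number of monomial maps ξ ∈ M_n with u ∈ ξ(U) and v ∈ ξ(V), divided by |M_n| = n!·(q-1)^n, equals A_{sw(u,v)}(U,V) / A_{sw(u,v)}(F_q^n, F_q^n). -/

import Mathlib

open scoped Classical
open Finset MvPolynomial

noncomputable section

variable {F : Type} [Field F] [Fintype F]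

/-- The set of orbits of the action of `Fˣ` on `F × F` by scalar multiplication. -/
abbrev Orb (F : Type) [Field F] [Fintype F] : Type :=
  Quotient (MulAction.orbitRel Fˣ (F × F))

/-- The orbit of the pair `(a, b)`. -/
def orbOf (a b : F) : Orb F := Quotient.mk (MulAction.orbitRel Fˣ (F × F)) (a, b)

/-- The second-order weight of a pair of vectors. -/
def sw {ι : Type} [Fintype ι] (u v : ι → F) (S : Orb F) : ℕ :=
  (Finset.univ.filter (fun i => orbOf (u i) (v i) = S)).card

/-- The second-order weight distribution. -/
def A2 {ι : Type} [Fintype ι] (U V : Finset (ι → F)) (w : Orb F → ℕ) : ℕ :=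
  ((U ×ˢ V).filter (fun p => sw p.1 p.2 = w)).card

/-- The second-order weight enumerator. -/
def W2 {ι : Type} [Fintype ι] (U V : Finset (ι → F)) : MvPolynomial (Orb F) ℚ :=
  ∑ u ∈ U, ∑ v ∈ V, ∏ S : Orb F, (X S) ^ sw u v S

/-- The monomial map `ξ_{c,σ}`. -/
def monoMap {ι : Type} (c : ι → Fˣ) (σ : Equiv.Perm ι) (v : ι → F) : ι → F :=
  fun i => (c i : F) * v (σ.symm i)

/-!
The monomial maps form the finite group `(ι → Fˣ) ⋊ Perm ι`, acting diagonally on pairs of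
vectors, and its orbits on pairs are exactly the level sets of the second-order weight: two pairs
with equal weight are matched coordinatewise by a permutation preserving the orbit labels and
then by a unit scaling of each coordinate. For any action of a finite group, `x ∈ g • T` for
exactly `|T ∩ G • x| * |Stab x|` elements `g` (orbit–stabilizer applied fibrewise), so the
proportion of such `g` is `|T ∩ G • x| / |G • x|`. Taking `x = (u, v)` and `T = U ×ˢ V` gives
`A_{sw(u,v)}(U, V) / A_{sw(u,v)}(Fⁿ, Fⁿ)`.
-/

open scoped Pointwise

theorem exists_perm_apply_eq_of_card_filter_eq {α β : Type*} [Fintype α] [DecidableEq β]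
    {f g : α → β} (h : ∀ b, #{a | f a = b} = #{a | g a = b}) :
    ∃ σ : Equiv.Perm α, ∀ a, g (σ a) = f a :=
  ⟨Equiv.ofFiberEquiv fun b => Fintype.equivOfCardEq (by simpa [Fintype.card_subtype] using h b),
    Equiv.ofFiberEquiv_map _⟩

namespace MulAction

variable {G X : Type*} [Group G] [Fintype G] [MulAction G X] [DecidableEq X]

theorem card_filter_smul_eq_eq_card_stabilizer {x y : X} (hy : y ∈ orbit G x) :
    #{g : G | g • x = y} = Fintype.card (stabilizer G x) := by
  obtain ⟨h, rfl⟩ := hy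
  rw [← Finset.card_univ]
  refine Finset.card_bij' (fun g _ => ⟨h⁻¹ * g, ?_⟩) (fun s _ => h * s) ?_ ?_ ?_ ?_
  · simp_all [mem_stabilizer_iff, mul_smul]
  all_goals simp [mem_stabilizer_iff, mul_smul]

theorem card_filter_smul_mem (x : X) (T : Finset X) :
    #{g : G | g • x ∈ T} = #{y ∈ T | y ∈ orbit G x} * Fintype.card (stabilizer G x) := by
  rw [Finset.card_eq_sum_card_fiberwise (f := (· • x)) (t := {y ∈ T | y ∈ orbit G x})
    fun g hg => Finset.mem_filter.mpr ⟨(Finset.mem_filter.mp hg).2, mem_orbit x g⟩,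
    Finset.sum_const_nat]
  intro y hy
  obtain ⟨hyT, hyx⟩ := Finset.mem_filter.mp hy
  rw [← card_filter_smul_eq_eq_card_stabilizer hyx, Finset.filter_filter]
  exact congrArg Finset.card (Finset.filter_congr fun g _ => by simp +contextual [hyT])

theorem card_filter_mem_smul_div_card [Fintype X] (x : X) (T : Finset X) :
    (#{g : G | x ∈ g • T} : ℚ) / Fintype.card G =
      #{y ∈ T | y ∈ orbit G x} / #{y | y ∈ orbit G x} := by
  have hinv : #{g : G | x ∈ g • T} = #{g : G | g • x ∈ T} :=
    Finset.card_equiv (Equiv.inv G) (by simp [← Finset.inv_smul_mem_iff])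
  have hG : Fintype.card G = #{g : G | g • x ∈ (Finset.univ : Finset X)} := by simp
  have hstab : (Fintype.card (stabilizer G x) : ℚ) ≠ 0 := by positivity
  rw [hinv, hG, card_filter_smul_mem, card_filter_smul_mem, Nat.cast_mul, Nat.cast_mul,
    mul_div_mul_right _ _ hstab]

end MulAction

theorem orbOf_eq_orbOf_iff {a b a' b' : F} :
    orbOf a b = orbOf a' b' ↔ ∃ d : Fˣ, (d : F) * a = a' ∧ (d : F) * b = b' := by
  rw [orbOf, orbOf, Quotient.eq, MulAction.orbitRel_apply, MulAction.mem_orbit_symm]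
  simp [MulAction.mem_orbit_iff, Units.smul_def]

/-- `mulAutArrow` lets `σ` act on `c` by `c ↦ c ∘ σ⁻¹`, which makes
`ξ_{c,σ} ∘ ξ_{c',σ'} = ξ_{(c,σ) * (c',σ')}`. -/
abbrev MonomialGroup (ι F : Type) [Field F] : Type :=
  (ι → Fˣ) ⋊[mulAutArrow] Equiv.Perm ι

namespace MonomialGroup

variable {ι K : Type} [Field K]

instance : MulAction (MonomialGroup ι K) (ι → K) where
  smul g v := monoMap g.left g.right v
  one_smul v := funext fun i => one_mul (v i)
  mul_smul g h v := by
    change monoMap (g * h).left (g * h).right v = monoMap g.left g.right (monoMap h.left h.right v)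
    funext i
    exact mul_assoc _ _ _

theorem smul_def (g : MonomialGroup ι K) (v : ι → K) : g • v = monoMap g.left g.right v := rfl

instance [Fintype ι] [DecidableEq ι] [Fintype K] : Fintype (MonomialGroup ι K) :=
  Fintype.ofEquiv _ SemidirectProduct.equivProd.symm

theorem fintype_card [Fintype ι] [DecidableEq ι] [Fintype K] :
    Fintype.card (MonomialGroup ι K) =
      (Fintype.card ι).factorial * (Fintype.card K - 1) ^ Fintype.card ι := by
  rw [Fintype.card_congr SemidirectProduct.equivProd, Fintype.card_prod, Fintype.card_fun,
    Fintype.card_units, Fintype.card_perm, mul_comm]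

variable [Fintype ι]

theorem sw_smul (g : MonomialGroup ι F) (u v : ι → F) : sw (g • u) (g • v) = sw u v := by
  funext S
  refine Finset.card_equiv g.right.symm fun i => ?_
  have : orbOf ((g • u) i) ((g • v) i) = orbOf (u (g.right.symm i)) (v (g.right.symm i)) :=
    orbOf_eq_orbOf_iff.mpr ⟨(g.left i)⁻¹, by simp [smul_def, monoMap]⟩
  simp [this]

theorem exists_smul_eq_of_sw_eq {u v u' v' : ι → F} (h : sw u v = sw u' v') :
    ∃ g : MonomialGroup ι F, g • u = u' ∧ g • v = v' := by
  obtain ⟨σ, hσ⟩ := exists_perm_apply_eq_of_card_filter_eq (congrFun h)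
  choose d hd using fun i => orbOf_eq_orbOf_iff.mp (hσ i).symm
  refine ⟨⟨fun j => d (σ.symm j), σ⟩, funext fun j => ?_, funext fun j => ?_⟩
  · simpa [smul_def, monoMap] using (hd (σ.symm j)).1
  · simpa [smul_def, monoMap] using (hd (σ.symm j)).2

theorem mem_orbit_iff_sw_eq {p q : (ι → F) × (ι → F)} :
    p ∈ MulAction.orbit (MonomialGroup ι F) q ↔ sw p.1 p.2 = sw q.1 q.2 := by
  constructor
  · rintro ⟨g, rfl⟩
    exact sw_smul g q.1 q.2
  · intro h
    obtain ⟨g, hu, hv⟩ := exists_smul_eq_of_sw_eq h.symm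
    exact ⟨g, Prod.ext hu hv⟩

end MonomialGroup

/-- For a uniformly distributed random monomial map `Ξ`, the probability that
`u ∈ Ξ(U)` and `v ∈ Ξ(V)` equals `A_{sw(u,v)}(U,V) / A_{sw(u,v)}(F_q^n, F_q^n)`. -/
theorem stmt_5 {F : Type} [Field F] [Fintype F] {n : ℕ}
    (U V : Finset (Fin n → F)) (u v : Fin n → F) :
    ((Finset.univ.filter
        (fun p : (Fin n → Fˣ) × Equiv.Perm (Fin n) =>
          u ∈ U.image (monoMap p.1 p.2) ∧ v ∈ V.image (monoMap p.1 p.2))).card : ℚ)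
        / ((n.factorial * (Fintype.card F - 1) ^ n : ℕ) : ℚ)
      = (A2 U V (sw u v) : ℚ)
        / (A2 (Finset.univ : Finset (Fin n → F)) Finset.univ (sw u v) : ℚ) := by
  let M := MonomialGroup (Fin n) F
  have hcount : #{p : (Fin n → Fˣ) × Equiv.Perm (Fin n) |
      u ∈ U.image (monoMap p.1 p.2) ∧ v ∈ V.image (monoMap p.1 p.2)} =
      #{g : M | (u, v) ∈ g • U ×ˢ V} :=
    Finset.card_equiv SemidirectProduct.equivProd.symm fun p => by
      rw [Finset.mem_filter_univ, Finset.mem_filter_univ, ← Finset.inv_smul_mem_iff, Prod.smul_mk,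
        Finset.mem_product, Finset.inv_smul_mem_iff, Finset.inv_smul_mem_iff]
      rfl
  have hcard : n.factorial * (Fintype.card F - 1) ^ n = Fintype.card M := by
    rw [MonomialGroup.fintype_card, Fintype.card_fin]
  have hA2 (T T' : Finset (Fin n → F)) :
      #{p ∈ T ×ˢ T' | p ∈ MulAction.orbit M (u, v)} = A2 T T' (sw u v) :=
    congrArg Finset.card (Finset.filter_congr fun p _ => MonomialGroup.mem_orbit_iff_sw_eq)
  calc _ = (#{g : M | (u, v) ∈ g • U ×ˢ V} : ℚ) / Fintype.card M := by rw [hcount, hcard]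
    _ = #{p ∈ U ×ˢ V | p ∈ MulAction.orbit M (u, v)} / #{p | p ∈ MulAction.orbit M (u, v)} :=
      MulAction.card_filter_mem_smul_div_card (u, v) (U ×ˢ V)
    _ = _ := by rw [hA2, ← Finset.univ_product_univ, hA2]
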